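/- Let S be a unital epsilon-strongly G-graded ring, and let r be a minimal nonzero element of the boolean semigroup generated by {ε_g : g ∈ G}. If r is γ-invariant (γ_g(r ε_{g⁻¹}) = r ε_g for all g), then r lies in the center Z(S). -/

import Mathlib

open Pointwise

section Defs

variable {G : Type} [AddGroup G] [DecidableEq G]
variable {A : Type} [Ring A]
variable {M : Type} [AddCommGroup M] [Module A M]

/-- The additive subgroup of `M` consisting of finite sums of products `a • m`
with `a ∈ S` and `m ∈ N`. -/
def prodSMul (S : AddSubgroup A) (N : AddSubgroup M) : AddSubgroup M where
  __ := S.toAddSubmonoid • N.toAddSubmonoid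
  neg_mem' {x} hx := by
    refine AddSubmonoid.smul_induction_on hx (fun a ha m hm => ?_) (fun x y hx hy => ?_)
    · rw [show -(a • m) = (-a) • m by rw [neg_smul]]
      exact AddSubmonoid.smul_mem_smul (S.neg_mem ha) hm
    · rw [neg_add]
      exact (S.toAddSubmonoid • N.toAddSubmonoid).add_mem hx hy

/-- A (possibly non-unital) ring, here an additive subgroup of `A` closed under
multiplication, is *s-unital* if every element has a left and a right local unit in it. -/
def IsSUnitalSub (I : AddSubgroup A) : Prop :=
  ∀ a ∈ I, ∃ u ∈ I, ∃ v ∈ I, u * a = a ∧ a * v = a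

variable (𝒜 : G → AddSubgroup A)

/-- `S` is symmetrically graded if `S_g S_{g⁻¹} S_g = S_g` for all `g`. -/
def IsSymmetricallyGraded : Prop := ∀ g : G, 𝒜 g * 𝒜 (-g) * 𝒜 g = 𝒜 g

/-- `S` is nearly epsilon-strongly graded if each `S_g` is an s-unital
`(S_g S_{g⁻¹}, S_{g⁻¹} S_g)`-bimodule: for every `s ∈ S_g` there are
`u ∈ S_g S_{g⁻¹}` and `v ∈ S_{g⁻¹} S_g` with `u s = s = s v`. -/
def IsNearlyEpsilonStrong : Prop :=
  ∀ g : G, ∀ s ∈ 𝒜 g, ∃ u ∈ 𝒜 g * 𝒜 (-g), ∃ v ∈ 𝒜 (-g) * 𝒜 g, u * s = s ∧ s * v = s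

end Defs

/-!
Every `ε g = ∑ uᵢ vᵢ` commutes with `x ∈ S_0`: `ε g` is a left unit on `S_g ∋ x uᵢ` and a right
unit on `S_{-g} ∋ vᵢ x`, so `x ε g` and `ε g x` both equal `ε g x ε g`. Hence so does every `r`
in the semigroup generated by the `ε g`. For `s ∈ S_g`, `γ`-invariance gives
`r s = r ε g s = ∑ uᵢ (r ε (-g)) vᵢ s`, and since `vᵢ s ∈ S_0` commutes with `r ε (-g)` this is
`ε g s r ε (-g) = s ε (-g) r = s r`.
-/
section EpsilonStrong

variable {ι R : Type*} [DecidableEq ι] [Ring R] {𝒜 : ι → AddSubgroup R}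

theorem mul_comm_of_forall_mem_homogeneous [AddMonoid ι] [GradedRing 𝒜] {r : R}
    (h : ∀ i, ∀ s ∈ 𝒜 i, r * s = s * r) (x : R) : r * x = x * r := by
  induction x using DirectSum.Decomposition.inductionOn 𝒜 with
  | zero => rw [mul_zero, zero_mul]
  | homogeneous s => exact h _ s s.2
  | add x y hx hy => rw [mul_add, add_mul, hx, hy]

variable [AddGroup ι] [GradedRing 𝒜] {g : ι} {n : ℕ} {u v : Fin n → R}

theorem sum_mul_mem_zero (hu : ∀ i, u i ∈ 𝒜 g) (hv : ∀ i, v i ∈ 𝒜 (-g)) :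
    ∑ i, u i * v i ∈ 𝒜 0 :=
  sum_mem fun i _ => add_neg_cancel g ▸ SetLike.mul_mem_graded (hu i) (hv i)

theorem mem_centralizer_of_sum_mul_eq {e : R} (hu : ∀ i, u i ∈ 𝒜 g) (hv : ∀ i, v i ∈ 𝒜 (-g))
    (he : ∑ i, u i * v i = e) (hleft : ∀ s ∈ 𝒜 g, e * s = s)
    (hright : ∀ t ∈ 𝒜 (-g), t * e = t) :
    e ∈ Subsemigroup.centralizer (𝒜 0 : Set R) := by
  refine Subsemigroup.mem_centralizer_iff.mpr fun x hx => ?_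
  have hxu : ∀ i, x * u i ∈ 𝒜 g := fun i => zero_add g ▸ SetLike.mul_mem_graded hx (hu i)
  have hvx : ∀ i, v i * x ∈ 𝒜 (-g) := fun i => add_zero (-g) ▸ SetLike.mul_mem_graded (hv i) hx
  have hxe : x * e = ∑ i, x * u i * v i := by
    rw [← he, Finset.mul_sum]; simp only [mul_assoc]
  have hex : e * x = ∑ i, u i * (v i * x) := by
    rw [← he, Finset.sum_mul]; simp only [mul_assoc]
  symm
  calc e * x = ∑ i, u i * (v i * x * e) := by simp only [hex, hright _ (hvx _)]
    _ = e * (x * e) := by rw [← mul_assoc, hex, Finset.sum_mul]; simp only [mul_assoc]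
    _ = x * e := by
      rw [hxe, Finset.mul_sum]
      exact Finset.sum_congr rfl fun i _ => by rw [← mul_assoc, hleft _ (hxu i)]

theorem sum_mul_mul_mul_of_mem_centralizer {c s : R} (hv : ∀ i, v i ∈ 𝒜 (-g))
    (hc : c ∈ Subsemigroup.centralizer (𝒜 0 : Set R)) (hs : s ∈ 𝒜 g) :
    (∑ i, u i * c * v i) * s = (∑ i, u i * v i) * s * c := by
  simp only [Finset.sum_mul]
  refine Finset.sum_congr rfl fun i _ => ?_
  have hvs : v i * s ∈ 𝒜 0 := neg_add_cancel g ▸ SetLike.mul_mem_graded (hv i) hs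
  rw [mul_assoc, mul_assoc, ← Subsemigroup.mem_centralizer_iff.mp hc _ hvs, mul_assoc,
    mul_assoc, mul_assoc]

theorem mul_comm_of_sum_mul_mul_eq {e e' r s : R} (hv : ∀ i, v i ∈ 𝒜 (-g))
    (he : ∑ i, u i * v i = e) (hr : r ∈ Subsemigroup.centralizer (𝒜 0 : Set R))
    (he' : e' ∈ Subsemigroup.centralizer (𝒜 0 : Set R)) (he'0 : e' ∈ 𝒜 0)
    (hinv : ∑ i, u i * (r * e') * v i = r * e) (hs : s ∈ 𝒜 g) (hes : e * s = s)
    (hse : s * e' = s) :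
    r * s = s * r :=
  calc r * s = (∑ i, u i * (r * e') * v i) * s := by rw [hinv, mul_assoc, hes]
    _ = e * s * (r * e') := by
      rw [sum_mul_mul_mul_of_mem_centralizer hv (Subsemigroup.mul_mem _ hr he') hs, he]
    _ = s * r := by
      rw [hes, ← Subsemigroup.mem_centralizer_iff.mp hr _ he'0, ← mul_assoc, hse]

end EpsilonStrong

theorem central_of_gamma_invariant
    {G : Type} [AddGroup G] [DecidableEq G]
    {A : Type} [Ring A] (𝒜 : G → AddSubgroup A) [GradedRing 𝒜]
    (ε : G → A)
    (hunit : ∀ g : G, ∀ s ∈ 𝒜 g, ε g * s = s ∧ s * ε (-g) = s)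
    (n : G → ℕ) (u v : (g : G) → Fin (n g) → A)
    (hu : ∀ g i, u g i ∈ 𝒜 g) (hv : ∀ g i, v g i ∈ 𝒜 (-g))
    (hsum : ∀ g : G, ∑ i, u g i * v g i = ε g)
    (r : A)
    (hrB : r ∈ Subsemigroup.closure (Set.range ε))
    (hinv : ∀ g : G, ∑ i, u g i * (r * ε (-g)) * v g i = r * ε g) :
    ∀ x : A, r * x = x * r := by
  have hε0 (g : G) : ε g ∈ 𝒜 0 := hsum g ▸ sum_mul_mem_zero (hu g) (hv g)
  have hεZ (g : G) : ε g ∈ Subsemigroup.centralizer (𝒜 0 : Set A) :=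
    mem_centralizer_of_sum_mul_eq (hu g) (hv g) (hsum g) (fun s hs => (hunit g s hs).1)
      (fun t ht => by simpa only [neg_neg] using (hunit (-g) t ht).2)
  have hrZ : r ∈ Subsemigroup.centralizer (𝒜 0 : Set A) :=
    Subsemigroup.closure_le.mpr (Set.range_subset_iff.mpr hεZ) hrB
  refine mul_comm_of_forall_mem_homogeneous (𝒜 := 𝒜) fun g s hs => ?_
  exact mul_comm_of_sum_mul_mul_eq (hv g) (hsum g) hrZ (hεZ (-g)) (hε0 (-g)) (hinv g) hs
    (hunit g s hs).1 (hunit g s hs).2
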